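/- Reduction via ansatz (3-36): let d1, d2, d3 be positive real constants with d1 > d3 and d1 ≠ d2, set κ = 1/√(d1 − d3), and let α0, α1, α2 be real constants. Suppose φ1, φ2, φ3 : ℝ → ℝ are differentiable and solve the ODE system φ1' + φ1(φ1 + φ2 − 1) − (α0(d1 − d3)/(d1 − d2))·φ3 = 0, φ2' + ((d2 − d3)/(d1 − d3))·φ2(φ1 + φ2 − 1) + (α0(d2 − d3)/(d1 − d2))·φ3 = 0, φ3' + φ3(φ1 + φ2) = 0. Define w(t,x) = φ3(t)·(α0 + α1·sin(κx)·exp(−d3κ²t) + α2·cos(κx)·exp(−d3κ²t)), u(t,x) = φ1(t) + ((d1 − d3)/(d1 − d2))·w(t,x), v(t,x) = φ2(t) − ((d1 − d3)/(d1 − d2))·w(t,x). Then (u, v, w) satisfies the HGF system (2-3*) at every point (t,x) ∈ ℝ × ℝ. -/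

import Mathlib

/-!
Write `w = φ3 (α0 + θ)` with `θ = (α1 sin κx + α2 cos κx) e^{-d3 κ² t}`. The mode `θ` solves the
heat equation `θ_t = d3 θ_xx` and, because `κ² = 1 / (d1 - d3)`, is an eigenfunction:
`(d1 - d3) θ_xx = -θ`. Since `u + v = φ1 + φ2`, the reaction terms only involve `φ1 + φ2`; after
substituting the ODEs for the `φi`, each equation of the system follows from the eigenfunction
relation and from `c (d1 - d2) = d1 - d3` for the coupling constant `c = (d1 - d3) / (d1 - d2)`.
-/

open Real

theorem deriv_sin_add_cos (κ a b : ℝ) :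
    deriv (fun y => a * sin (κ * y) + b * cos (κ * y))
      = fun y => κ * (-b * sin (κ * y) + a * cos (κ * y)) := by
  funext y
  have hs := ((hasDerivAt_const_mul κ (x := y)).sin).const_mul a
  have hc := ((hasDerivAt_const_mul κ (x := y)).cos).const_mul b
  exact (hs.add hc).deriv.trans (by ring)

theorem deriv_deriv_sin_add_cos (κ a b : ℝ) :
    deriv (deriv fun y => a * sin (κ * y) + b * cos (κ * y))
      = fun y => -κ ^ 2 * (a * sin (κ * y) + b * cos (κ * y)) := by
  rw [deriv_sin_add_cos, deriv_const_mul_field', deriv_sin_add_cos]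
  funext y; ring

noncomputable def heatMode (D κ a b t x : ℝ) : ℝ :=
  (a * sin (κ * x) + b * cos (κ * x)) * exp (-D * κ ^ 2 * t)

theorem deriv_deriv_heatMode_space (D κ a b t x : ℝ) :
    deriv (deriv (heatMode D κ a b t)) x = -κ ^ 2 * heatMode D κ a b t x := by
  unfold heatMode
  rw [deriv_mul_const_field', deriv_mul_const_field', deriv_deriv_sin_add_cos]
  ring

theorem hasDerivAt_heatMode_time (D κ a b t x : ℝ) :
    HasDerivAt (heatMode D κ a b · x) (D * deriv (deriv (heatMode D κ a b t)) x) t := by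
  rw [deriv_deriv_heatMode_space]
  have := ((hasDerivAt_const_mul (-D * κ ^ 2) (x := t)).exp).const_mul
    (a * sin (κ * x) + b * cos (κ * x))
  exact this.congr_deriv (by unfold heatMode; ring)

theorem deriv_deriv_const_add_const_mul {𝕜 : Type*} [NontriviallyNormedField 𝕜]
    (a b : 𝕜) (f : 𝕜 → 𝕜) :
    deriv (deriv fun z => a + b * f z) = fun x => b * deriv (deriv f) x := by
  rw [deriv_const_add', deriv_const_mul_field', deriv_const_mul_field']

def HGFSystem (d1 d2 d3 : ℝ) (u v w : ℝ → ℝ → ℝ) : Prop :=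
  ∀ t x : ℝ,
    deriv (u · x) t = d1 * deriv (deriv (u t)) x + u t x * (1 - u t x - v t x) ∧
    deriv (v · x) t = d2 * deriv (deriv (v t)) x
      + (d2 - d3) / (d1 - d3) * (v t x * (1 - u t x - v t x)) + u t x * w t x + v t x * w t x ∧
    deriv (w · x) t = d3 * deriv (deriv (w t)) x - u t x * w t x - v t x * w t x

theorem hgfSystem_of_ansatz {d1 d2 d3 α0 c : ℝ} (hd13 : d1 ≠ d3) (hc : c * (d1 - d2) = d1 - d3)
    {φ1 φ2 φ3 : ℝ → ℝ}
    (hφ1 : ∀ t, HasDerivAt φ1 (α0 * c * φ3 t - φ1 t * (φ1 t + φ2 t - 1)) t)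
    (hφ2 : ∀ t, HasDerivAt φ2 (-((d2 - d3) / (d1 - d3) * (φ2 t * (φ1 t + φ2 t - 1)))
      - α0 * c * ((d2 - d3) / (d1 - d3)) * φ3 t) t)
    (hφ3 : ∀ t, HasDerivAt φ3 (-(φ3 t * (φ1 t + φ2 t))) t)
    {θ : ℝ → ℝ → ℝ}
    (hθ_heat : ∀ t x, HasDerivAt (θ · x) (d3 * deriv (deriv (θ t)) x) t)
    (hθ_eigen : ∀ t x, (d1 - d3) * deriv (deriv (θ t)) x = -θ t x)
    {u v w : ℝ → ℝ → ℝ} (hw : ∀ t x, w t x = φ3 t * (α0 + θ t x))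
    (hu : ∀ t x, u t x = φ1 t + c * w t x) (hv : ∀ t x, v t x = φ2 t - c * w t x) :
    HGFSystem d1 d2 d3 u v w := by
  intro t x
  have hwt : HasDerivAt (w · x)
      (-(φ3 t * (φ1 t + φ2 t)) * (α0 + θ t x) + φ3 t * (d3 * deriv (deriv (θ t)) x)) t := by
    simp only [hw]
    exact (hφ3 t).mul ((hθ_heat t x).const_add α0)
  have hut := ((hφ1 t).add (hwt.const_mul c)).congr_of_eventuallyEq (.of_forall fun s => hu s x)
  have hvt := ((hφ2 t).sub (hwt.const_mul c)).congr_of_eventuallyEq (.of_forall fun s => hv s x)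
  have hwxx : deriv (deriv (w t)) x = φ3 t * deriv (deriv (θ t)) x := by
    have : w t = fun z => φ3 t * α0 + φ3 t * θ t z := funext fun z => by rw [hw]; ring
    rw [this, deriv_deriv_const_add_const_mul]
  have huxx : deriv (deriv (u t)) x = c * deriv (deriv (w t)) x := by
    rw [show u t = fun z => φ1 t + c * w t z from funext (hu t), deriv_deriv_const_add_const_mul]
  have hvxx : deriv (deriv (v t)) x = -c * deriv (deriv (w t)) x := by
    have : v t = fun z => φ2 t + -c * w t z := funext fun z => by rw [hv]; ring
    rw [this, deriv_deriv_const_add_const_mul]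
  have hJ : (d1 - d3) * (d1 - d3)⁻¹ = 1 := mul_inv_cancel₀ (sub_ne_zero.mpr hd13)
  have hθxx := hθ_eigen t x
  refine ⟨?_, ?_, ?_⟩
  · rw [hut.deriv, huxx, hwxx, hu, hv, hw]
    linear_combination (-c * φ3 t) * hθxx
  · rw [hvt.deriv, hvxx, hwxx, hu, hv, hw]
    linear_combination c * ((d2 - d3) / (d1 - d3)) * φ3 t * hθxx
      + (φ1 t + φ2 t) * (φ3 t * (α0 + θ t x)) * (d1 - d3)⁻¹ * hc
      + ((φ1 t + φ2 t) * (φ3 t * (α0 + θ t x)) * (1 - c)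
        - c * φ3 t * (d2 - d3) * deriv (deriv (θ t)) x) * hJ
  · rw [hwt.deriv, hwxx, hu, hv, hw]
    ring

theorem hgf_reduction_ansatz_3_36_general
    (d1 d2 d3 : ℝ)
    (hd13 : d3 < d1) (hd12 : d1 ≠ d2)
    (κ : ℝ) (hκ : κ = 1 / Real.sqrt (d1 - d3))
    (α0 α1 α2 : ℝ)
    (φ1 φ2 φ3 : ℝ → ℝ)
    (hφ1 : Differentiable ℝ φ1) (hφ2 : Differentiable ℝ φ2) (hφ3 : Differentiable ℝ φ3)
    (hode1 : ∀ t : ℝ, deriv φ1 t + φ1 t * (φ1 t + φ2 t - 1)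
        - (α0 * (d1 - d3) / (d1 - d2)) * φ3 t = 0)
    (hode2 : ∀ t : ℝ, deriv φ2 t + ((d2 - d3) / (d1 - d3)) * (φ2 t * (φ1 t + φ2 t - 1))
        + (α0 * (d2 - d3) / (d1 - d2)) * φ3 t = 0)
    (hode3 : ∀ t : ℝ, deriv φ3 t + φ3 t * (φ1 t + φ2 t) = 0)
    (u v w : ℝ → ℝ → ℝ)
    (hw : ∀ t x : ℝ, w t x = φ3 t * (α0 + α1 * Real.sin (κ * x) * Real.exp (-d3 * κ ^ 2 * t)
        + α2 * Real.cos (κ * x) * Real.exp (-d3 * κ ^ 2 * t)))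
    (hu : ∀ t x : ℝ, u t x = φ1 t + ((d1 - d3) / (d1 - d2)) * w t x)
    (hv : ∀ t x : ℝ, v t x = φ2 t - ((d1 - d3) / (d1 - d2)) * w t x) :
    ∀ t x : ℝ,
      deriv (fun s => u s x) t
        = d1 * deriv (fun y => deriv (fun z => u t z) y) x
          + u t x * (1 - u t x - v t x) ∧
      deriv (fun s => v s x) t
        = d2 * deriv (fun y => deriv (fun z => v t z) y) x
          + ((d2 - d3) / (d1 - d3)) * (v t x * (1 - u t x - v t x))
          + u t x * w t x + v t x * w t x ∧
      deriv (fun s => w s x) t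
        = d3 * deriv (fun y => deriv (fun z => w t z) y) x
          - u t x * w t x - v t x * w t x := by
  have hd13' : d1 - d3 ≠ 0 := sub_ne_zero.mpr hd13.ne'
  have hJ : (d1 - d3) * (d1 - d3)⁻¹ = 1 := mul_inv_cancel₀ hd13'
  have hκ2 : (d1 - d3) * κ ^ 2 = 1 := by
    rw [hκ, div_pow, one_pow, Real.sq_sqrt (sub_nonneg.mpr hd13.le), mul_one_div_cancel hd13']
  exact hgfSystem_of_ansatz (α0 := α0) (θ := heatMode d3 κ α1 α2) hd13.ne'
    (div_mul_cancel₀ _ (sub_ne_zero.mpr hd12))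
    (fun t => (hφ1 t).hasDerivAt.congr_deriv (by linear_combination hode1 t))
    (fun t => (hφ2 t).hasDerivAt.congr_deriv
      (by linear_combination hode2 t + α0 * φ3 t * (d2 - d3) * (d1 - d2)⁻¹ * hJ))
    (fun t => (hφ3 t).hasDerivAt.congr_deriv (by linear_combination hode3 t))
    (hasDerivAt_heatMode_time d3 κ α1 α2)
    (fun t x => by
      rw [deriv_deriv_heatMode_space]
      linear_combination (-heatMode d3 κ α1 α2 t x) * hκ2)
    (fun t x => by rw [hw, heatMode]; ring) hu hv

/-- Reduction via ansatz (3-36) to the HGF system (2-3*). -/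
theorem hgf_reduction_ansatz_3_36
    (d1 d2 d3 : ℝ) (hd1 : 0 < d1) (hd2 : 0 < d2) (hd3 : 0 < d3)
    (hd13 : d3 < d1) (hd12 : d1 ≠ d2)
    (κ : ℝ) (hκ : κ = 1 / Real.sqrt (d1 - d3))
    (α0 α1 α2 : ℝ)
    (φ1 φ2 φ3 : ℝ → ℝ)
    (hφ1 : Differentiable ℝ φ1) (hφ2 : Differentiable ℝ φ2) (hφ3 : Differentiable ℝ φ3)
    (hode1 : ∀ t : ℝ, deriv φ1 t + φ1 t * (φ1 t + φ2 t - 1)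
        - (α0 * (d1 - d3) / (d1 - d2)) * φ3 t = 0)
    (hode2 : ∀ t : ℝ, deriv φ2 t + ((d2 - d3) / (d1 - d3)) * (φ2 t * (φ1 t + φ2 t - 1))
        + (α0 * (d2 - d3) / (d1 - d2)) * φ3 t = 0)
    (hode3 : ∀ t : ℝ, deriv φ3 t + φ3 t * (φ1 t + φ2 t) = 0)
    (u v w : ℝ → ℝ → ℝ)
    (hw : ∀ t x : ℝ, w t x = φ3 t * (α0 + α1 * Real.sin (κ * x) * Real.exp (-d3 * κ ^ 2 * t)
        + α2 * Real.cos (κ * x) * Real.exp (-d3 * κ ^ 2 * t)))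
    (hu : ∀ t x : ℝ, u t x = φ1 t + ((d1 - d3) / (d1 - d2)) * w t x)
    (hv : ∀ t x : ℝ, v t x = φ2 t - ((d1 - d3) / (d1 - d2)) * w t x) :
    ∀ t x : ℝ,
      deriv (fun s => u s x) t
        = d1 * deriv (fun y => deriv (fun z => u t z) y) x
          + u t x * (1 - u t x - v t x) ∧
      deriv (fun s => v s x) t
        = d2 * deriv (fun y => deriv (fun z => v t z) y) x
          + ((d2 - d3) / (d1 - d3)) * (v t x * (1 - u t x - v t x))
          + u t x * w t x + v t x * w t x ∧
      deriv (fun s => w s x) t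
        = d3 * deriv (fun y => deriv (fun z => w t z) y) x
          - u t x * w t x - v t x * w t x :=
  hgf_reduction_ansatz_3_36_general d1 d2 d3 hd13 hd12 κ hκ α0 α1 α2 φ1 φ2 φ3 hφ1 hφ2 hφ3 hode1
    hode2 hode3 u v w hw hu hv
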